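/- Let F_n be the free group of rank n ≥ 3 and let P(n,k) denote the number of primitive elements (elements belonging to some free basis of F_n) of length exactly k. Then P(n,k) ≥ c₁ · (2n-3)^k for some constant c₁ > 0 independent of k. -/

import Mathlib

/-- An element of a free group is primitive if some automorphism maps it to a
generator, i.e., it is part of some free basis. -/
def IsPrimitive {n : ℕ} (u : FreeGroup (Fin n)) : Prop :=
  ∃ (e : FreeGroup (Fin n) ≃* FreeGroup (Fin n)) (i : Fin n), e u = FreeGroup.of i

/-!
For `w` in the free group on `x₁, …, x_{n-1}`, the element `x₀ w` is primitive, because the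
transvection `x₀ ↦ x₀ w⁻¹` (fixing the other generators) is an automorphism sending it to `x₀`.
The word `x₀ w` is reduced, so `w ↦ x₀ w` injects the sphere of radius `k - 1` of `F_{n-1}` into
the primitive elements of length `k` of `F_n`. That sphere has at least `(2n-3)^(k-1)` elements:
a reduced word can be written letter by letter, each letter avoiding only the inverse of the
previous one, which leaves `2(n-1) - 1` choices.
-/

open Function FreeGroup

section AvoidingChains

variable {β : Type*} {d : ℕ} (e : β ≃ Fin (d + 1)) (bar : β → β)

def avoidStep (b : β) (a : Fin d) : β := e.symm ((e (bar b)).succAbove a)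

lemma avoidStep_ne (b : β) (a : Fin d) : avoidStep e bar b a ≠ bar b := fun h =>
  Fin.succAbove_ne _ a (e.symm_apply_eq.mp h)

lemma avoidStep_injective (b : β) : Injective (avoidStep e bar b) := fun _ _ h =>
  Fin.succAbove_right_injective (e.symm.injective h)

def avoidChain : β → List (Fin d) → List β
  | _, [] => []
  | b, a :: l => avoidStep e bar b a :: avoidChain (avoidStep e bar b a) l

lemma length_avoidChain (b : β) (l : List (Fin d)) : (avoidChain e bar b l).length = l.length := by
  induction l generalizing b with
  | nil => rfl
  | cons a l ih => simp [avoidChain, ih]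

lemma avoidChain_injective (b : β) : Injective (avoidChain e bar b) := by
  intro l l' h
  induction l generalizing b l' with
  | nil => cases l' <;> simp_all [avoidChain]
  | cons a l ih =>
    cases l' with
    | nil => simp [avoidChain] at h
    | cons a' l' =>
      simp only [avoidChain, List.cons.injEq] at h
      obtain rfl := avoidStep_injective e bar b h.1
      exact congrArg (a :: ·) (ih _ h.2)

lemma isChain_avoidChain (b : β) (l : List (Fin d)) :
    (b :: avoidChain e bar b l).IsChain (fun x y => y ≠ bar x) := by
  induction l generalizing b with
  | nil => exact List.isChain_singleton b
  | cons a l ih => exact List.isChain_cons_cons.mpr ⟨avoidStep_ne e bar b a, ih _⟩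

end AvoidingChains

section WordSphere

variable {α : Type*}

lemma isReduced_of_isChain_ne_inv {L : List (α × Bool)}
    (h : L.IsChain fun x y => y ≠ (x.1, !x.2)) : IsReduced L :=
  h.imp fun ⟨a, s⟩ ⟨b, t⟩ hne hab => by
    dsimp only at hab; subst hab; cases s <;> cases t <;> simp_all

variable [DecidableEq α]

def wordSphere (α : Type*) [DecidableEq α] (ℓ : ℕ) : Set (FreeGroup α) := {x | x.toWord.length = ℓ}

lemma finite_wordSphere [Finite α] (ℓ : ℕ) : (wordSphere α ℓ).Finite :=
  ((List.finite_length_eq (α × Bool) ℓ).preimage toWord_injective.injOn)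

lemma pow_le_ncard_wordSphere [Finite α] [Nonempty α] (ℓ : ℕ) :
    (2 * Nat.card α - 1) ^ ℓ ≤ (wordSphere α ℓ).ncard := by
  have : Fintype α := Fintype.ofFinite α
  have hcard : Fintype.card (α × Bool) = 2 * Nat.card α - 1 + 1 := by
    have := Nat.card_pos (α := α)
    rw [Fintype.card_prod, Fintype.card_bool, ← Nat.card_eq_fintype_card]
    omega
  let e := Fintype.equivFinOfCardEq hcard
  let bar : α × Bool → α × Bool := fun x => (x.1, !x.2)
  obtain ⟨b⟩ : Nonempty (α × Bool) := inferInstance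
  let word (v : List.Vector (Fin (2 * Nat.card α - 1)) ℓ) : List (α × Bool) :=
    avoidChain e bar b v.toList
  have hword (v) : (mk (word v)).toWord = word v := by
    rw [toWord_mk]
    exact (isReduced_of_isChain_ne_inv (isChain_avoidChain e bar b v.toList).tail).reduce_eq
  let f (v : List.Vector (Fin (2 * Nat.card α - 1)) ℓ) : wordSphere α ℓ :=
    ⟨mk (word v), by simp [wordSphere, hword, word, length_avoidChain]⟩
  have hf : Injective f := fun v v' h => by
    have := congrArg (fun x : wordSphere α ℓ => (x : FreeGroup α).toWord) h
    simp only [f, hword] at this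
    exact List.Vector.toList_injective (avoidChain_injective e bar b this)
  have := (finite_wordSphere (α := α) ℓ).to_subtype
  simpa [Nat.card_eq_fintype_card] using Nat.card_le_card_of_injective f hf

end WordSphere

section Transvection

variable {m : ℕ}

def transvectionHom (w : FreeGroup (Fin m)) : FreeGroup (Fin (m + 1)) →* FreeGroup (Fin (m + 1)) :=
  lift (Fin.cons (of 0 * map Fin.succ w) fun j => of j.succ)

@[simp]
lemma transvectionHom_of_zero (w : FreeGroup (Fin m)) :
    transvectionHom w (of 0) = of 0 * map Fin.succ w := by
  simp [transvectionHom]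

@[simp]
lemma transvectionHom_map_succ (w u : FreeGroup (Fin m)) :
    transvectionHom w (map Fin.succ u) = map Fin.succ u := by
  have : (transvectionHom w).comp (map Fin.succ) = map Fin.succ :=
    ext_hom _ _ fun j => by simp [transvectionHom]
  exact DFunLike.congr_fun this u

lemma transvectionHom_comp (w w' : FreeGroup (Fin m)) :
    (transvectionHom w).comp (transvectionHom w') = transvectionHom (w * w') := by
  refine ext_hom _ _ fun i => Fin.cases ?_ (fun j => ?_) i
  · simp [mul_assoc]
  · simp [transvectionHom]

lemma transvectionHom_one : transvectionHom (1 : FreeGroup (Fin m)) = MonoidHom.id _ :=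
  ext_hom _ _ fun i => Fin.cases (by simp) (fun j => by simp [transvectionHom]) i

def transvection (w : FreeGroup (Fin m)) : FreeGroup (Fin (m + 1)) ≃* FreeGroup (Fin (m + 1)) :=
  MonoidHom.toMulEquiv (transvectionHom w) (transvectionHom w⁻¹)
    (by rw [transvectionHom_comp, inv_mul_cancel, transvectionHom_one])
    (by rw [transvectionHom_comp, mul_inv_cancel, transvectionHom_one])

lemma isPrimitive_of_zero_mul_map_succ (w : FreeGroup (Fin m)) :
    IsPrimitive (of 0 * map Fin.succ w) :=
  ⟨transvection w⁻¹, 0, by simp [transvection, mul_assoc]⟩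

end Transvection

section PrimitiveWords

lemma isReduced_map_of_injective {α β : Type*} {f : α → β} (hf : Injective f)
    {L : List (α × Bool)} (h : IsReduced L) : IsReduced (L.map fun x => (f x.1, x.2)) :=
  List.isChain_map_of_isChain _ (fun _ _ hab hf' => hab (hf hf')) h

variable {m : ℕ}

lemma toWord_of_zero_mul_map_succ (w : FreeGroup (Fin m)) :
    (of 0 * map Fin.succ w).toWord = (0, true) :: w.toWord.map fun x => (x.1.succ, x.2) := by
  conv_lhs => rw [← mk_toWord (x := w), map.mk, of, mul_mk, List.singleton_append, toWord_mk]
  refine IsReduced.reduce_eq (List.isChain_cons.mpr ⟨?_, ?_⟩)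
  · intro b hb h0
    simp only [List.head?_map, Option.mem_def, Option.map_eq_some_iff] at hb
    obtain ⟨a, -, rfl⟩ := hb
    exact absurd h0.symm (Fin.succ_ne_zero a.1)
  · exact isReduced_map_of_injective (Fin.succ_injective m) isReduced_toWord

lemma ncard_wordSphere_le_ncard_primitive (ℓ : ℕ) :
    (wordSphere (Fin m) ℓ).ncard ≤
      {u : FreeGroup (Fin (m + 1)) | IsPrimitive u ∧ u.toWord.length = ℓ + 1}.ncard := by
  refine Set.ncard_le_ncard_of_injOn (fun w => of 0 * map Fin.succ w) (fun w hw => ?_)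
    ((mul_right_injective _).comp (map_injective (Fin.succ_injective m))).injOn
    ((finite_wordSphere (ℓ + 1)).subset fun u hu => hu.2)
  refine ⟨isPrimitive_of_zero_mul_map_succ w, ?_⟩
  simp only [toWord_of_zero_mul_map_succ, List.length_cons, List.length_map]
  exact congrArg (· + 1) hw

end PrimitiveWords

/-- Lower bound on the number of primitive elements of length `k` in `F_n`, `n ≥ 3`:
`P(n,k) ≥ c₁ · (2n-3)^k` for some constant `c₁ > 0`. -/
theorem stmt_10 (n : ℕ) (hn : 3 ≤ n) :
    ∃ c₁ : ℝ, 0 < c₁ ∧ ∀ k : ℕ, 1 ≤ k →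
      c₁ * (2 * (n : ℝ) - 3) ^ k ≤
        (Set.ncard {u : FreeGroup (Fin n) |
          IsPrimitive u ∧ (FreeGroup.toWord u).length = k} : ℝ) := by
  obtain ⟨m, rfl⟩ : ∃ m, n = m + 1 := ⟨n - 1, by omega⟩
  have hbase : 2 * ((m + 1 : ℕ) : ℝ) - 3 = ((2 * m - 1 : ℕ) : ℝ) := by
    rw [Nat.cast_sub (by omega)]; push_cast; ring
  have hpos : (0 : ℝ) < (2 * m - 1 : ℕ) := by exact_mod_cast (by omega : 0 < 2 * m - 1)
  refine ⟨(2 * ((m + 1 : ℕ) : ℝ) - 3)⁻¹, by rwa [hbase, inv_pos], fun k hk => ?_⟩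
  obtain ⟨ℓ, rfl⟩ : ∃ ℓ, k = ℓ + 1 := ⟨k - 1, by omega⟩
  have : Nonempty (Fin m) := ⟨⟨0, by omega⟩⟩
  have hcount : (2 * m - 1) ^ ℓ ≤
      {u : FreeGroup (Fin (m + 1)) | IsPrimitive u ∧ u.toWord.length = ℓ + 1}.ncard := by
    simpa only [Nat.card_fin] using
      (pow_le_ncard_wordSphere (α := Fin m) ℓ).trans (ncard_wordSphere_le_ncard_primitive ℓ)
  rw [hbase, pow_succ', ← mul_assoc, inv_mul_cancel₀ hpos.ne', one_mul]
  exact_mod_cast hcount
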